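/- arXiv:1606.07649 — 5 statements merged into one kernel-verified Lean document; each statement's English description precedes it below -/
import Mathlib

section
/- Let G act on a manifold M and lift the action to TG acting on TM by (g,ξ)·v_m = TΦ_g(v_m + ξ_M(m)) under the identification TG ≅ G × 𝔤. Then the fundamental vector fields of this TG-action on TM corresponding to (ξ,0) and (0,ξ) in the Lie algebra 𝔤 × 𝔤 of TG are (ξ_M)^C and (ξ_M)^V respectively. -/
/- STATEMENT 4: For the lifted TG-action on TM, (g,ξ)·v_m = TΦ_g(v_m + ξ_M(m)), the
fundamental vector fields corresponding to (ξ,0) and (0,ξ) ∈ 𝔤 × 𝔤 are (ξ_M)^C and (ξ_M)^V.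

Formalization: M carries a global chart E, TM = E × E.  Let X = ξ_M be the fundamental
vector field of ξ, and let φ t = Φ_{exp(tξ)} be its flow (the one-parameter subgroup of the
action generated by ξ).  The one-parameter group of transformations of TM generated by
(ξ,0) is t ↦ TΦ_{exp(tξ)}, i.e. p ↦ (φ t p.1, D(φ t)(p.1) p.2), and the one generated by
(0,ξ) is t ↦ (p.1, p.2 + t ξ_M(p.1)).  The claim is that their infinitesimal generators
(derivatives at t = 0) are X^C and X^V respectively. -/

noncomputable section

/-- Complete lift of a vector field to TM = E × E. -/
def cLift {E : Type*} [NormedAddCommGroup E] [NormedSpace ℝ E]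
    (X : E → E) : E × E → E × E :=
  fun p => (X p.1, fderiv ℝ X p.1 p.2)

/-- Vertical lift of a vector field to TM = E × E. -/
def vLift {E : Type*} [NormedAddCommGroup E] [NormedSpace ℝ E]
    (X : E → E) : E × E → E × E :=
  fun p => (0, X p.1)

theorem fundamental_vector_fields_of_lifted_action
    {E : Type*} [NormedAddCommGroup E] [NormedSpace ℝ E]
    (X : E → E) (hX : ContDiff ℝ (⊤ : ℕ∞) X)
    (φ : ℝ → E → E) (hφ0 : φ 0 = id)
    (hφgrp : ∀ s t x, φ (s + t) x = φ s (φ t x))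
    (hφsmooth : ContDiff ℝ (⊤ : ℕ∞) (fun q : ℝ × E => φ q.1 q.2))
    (hflow : ∀ t x, HasDerivAt (fun s => φ s x) (X (φ t x)) t) :
    -- the fundamental vector field of (ξ, 0) is ξ_M^C
    (∀ p : E × E,
      HasDerivAt (fun t => (φ t p.1, fderiv ℝ (φ t) p.1 p.2)) (cLift X p) 0) ∧
    -- the fundamental vector field of (0, ξ) is ξ_M^V
    (∀ p : E × E,
      HasDerivAt (fun t : ℝ => (p.1, p.2 + t • X p.1)) (vLift X p) 0) := by
  set F : ℝ × E → E := fun q => φ q.1 q.2 with hF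
  have hFd : Differentiable ℝ F := hφsmooth.differentiable (by simp)
  have hF' : ContDiff ℝ (⊤ : ℕ∞) (fderiv ℝ F) := hφsmooth.fderiv_right (by simp)
  have hF'd : Differentiable ℝ (fderiv ℝ F) := hF'.differentiable (by simp)
  -- fderiv of φ t at x in terms of fderiv of F
  have hA : ∀ t x v, fderiv ℝ (φ t) x v = fderiv ℝ F (t, x) (0, v) := by
    intro t x v
    have h1 : HasFDerivAt (fun y : E => (t, y))
        ((0 : E →L[ℝ] ℝ).prod (ContinuousLinearMap.id ℝ E)) x :=
      (hasFDerivAt_const t x).prodMk (hasFDerivAt_id x)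
    have h2 : HasFDerivAt (fun y : E => F (t, y))
        ((fderiv ℝ F (t, x)).comp ((0 : E →L[ℝ] ℝ).prod (ContinuousLinearMap.id ℝ E))) x :=
      (hFd (t, x)).hasFDerivAt.comp x h1
    have : fderiv ℝ (φ t) x =
        (fderiv ℝ F (t, x)).comp ((0 : E →L[ℝ] ℝ).prod (ContinuousLinearMap.id ℝ E)) :=
      h2.fderiv
    rw [this]; rfl
  -- time derivative of F is X ∘ F
  have hB : ∀ t x, fderiv ℝ F (t, x) (1, 0) = X (φ t x) := by
    intro t x
    have h1 : HasDerivAt (fun s : ℝ => (s, x)) (1, 0) t := by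
      simpa using (hasDerivAt_id t).prodMk (hasDerivAt_const t x)
    have h2 : HasDerivAt (fun s => F (s, x)) (fderiv ℝ F (t, x) (1, 0)) t :=
      by have := (hFd (t, x)).hasFDerivAt.comp_hasDerivAt t h1; exact this
    exact h2.unique (hflow t x)
  -- fderiv of φ 0 is identity
  have hid : ∀ v : E, fderiv ℝ F ((0 : ℝ), v) = fderiv ℝ F (0, v) := fun _ => rfl
  constructor
  · intro p
    -- first component
    have hc1 : HasDerivAt (fun t => φ t p.1) (X p.1) 0 := by
      have := hflow 0 p.1
      rwa [hφ0] at this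
    -- second component
    have key : HasDerivAt (fun t => fderiv ℝ (φ t) p.1 p.2) (fderiv ℝ X p.1 p.2) 0 := by
      have h1 : HasDerivAt (fun t : ℝ => (t, p.1)) (1, 0) 0 := by
        simpa using (hasDerivAt_id (0:ℝ)).prodMk (hasDerivAt_const (0:ℝ) p.1)
      have h2 : HasDerivAt (fun t : ℝ => fderiv ℝ F (t, p.1))
          (fderiv ℝ (fderiv ℝ F) ((0 : ℝ), p.1) (1, 0)) 0 :=
        (hF'd ((0:ℝ), p.1)).hasFDerivAt.comp_hasDerivAt 0 h1
      have h3 : HasDerivAt (fun t : ℝ => fderiv ℝ F (t, p.1) (0, p.2))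
          (fderiv ℝ (fderiv ℝ F) ((0 : ℝ), p.1) (1, 0) (0, p.2)) 0 :=
        by
          have hcon : HasDerivAt (fun _ : ℝ => ((0 : ℝ), p.2)) 0 0 := hasDerivAt_const _ _
          simpa using h2.clm_apply hcon
      -- symmetry of second derivative
      have hsymm : fderiv ℝ (fderiv ℝ F) ((0 : ℝ), p.1) (1, 0) (0, p.2) =
          fderiv ℝ (fderiv ℝ F) ((0 : ℝ), p.1) (0, p.2) (1, 0) :=
        second_derivative_symmetric (fun y => (hFd y).hasFDerivAt)
          (hF'd ((0:ℝ), p.1)).hasFDerivAt _ _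
      -- compute the symmetric expression
      have hG : (fun q : ℝ × E => fderiv ℝ F q (1, 0)) = fun q : ℝ × E => X (F q) := by
        funext q; exact hB q.1 q.2
      have h4 : fderiv ℝ (fderiv ℝ F) ((0 : ℝ), p.1) (0, p.2) (1, 0) =
          fderiv ℝ X p.1 p.2 := by
        have e1 : HasFDerivAt (fun q : ℝ × E => fderiv ℝ F q (1, 0))
            ((ContinuousLinearMap.apply ℝ E ((1:ℝ), (0:E))).comp
              (fderiv ℝ (fderiv ℝ F) ((0 : ℝ), p.1))) ((0:ℝ), p.1) :=
          (ContinuousLinearMap.apply ℝ E ((1:ℝ), (0:E))).hasFDerivAt.comp _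
            (hF'd ((0:ℝ), p.1)).hasFDerivAt
        have e2 : HasFDerivAt (fun q : ℝ × E => X (F q))
            ((fderiv ℝ X p.1).comp (fderiv ℝ F ((0 : ℝ), p.1))) ((0:ℝ), p.1) := by
          have hx1 : F ((0:ℝ), p.1) = p.1 := by simp [hF, hφ0]
          have := ((hX.differentiable (by simp)) (F ((0:ℝ), p.1))).hasFDerivAt.comp
            ((0:ℝ), p.1) (hFd ((0:ℝ), p.1)).hasFDerivAt
          rwa [hx1] at this
        rw [hG] at e1
        have e3 := e1.unique e2
        have e4 : fderiv ℝ (fderiv ℝ F) ((0 : ℝ), p.1) (0, p.2) (1, 0) =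
            fderiv ℝ X p.1 (fderiv ℝ F ((0 : ℝ), p.1) (0, p.2)) := by
          have := congrFun (congrArg DFunLike.coe e3) ((0 : ℝ), p.2)
          simpa using this
        rw [e4]
        congr 1
        rw [← hA 0 p.1 p.2, hφ0]
        simp
      have := h3
      rw [hsymm, h4] at this
      -- rewrite function via hA
      have hfun : (fun t : ℝ => fderiv ℝ F (t, p.1) (0, p.2)) =
          fun t : ℝ => fderiv ℝ (φ t) p.1 p.2 := by
        funext t; rw [hA]
      rwa [hfun] at this
    exact hc1.prodMk key
  · intro p
    have h1 : HasDerivAt (fun t : ℝ => p.2 + t • X p.1) (X p.1) 0 := by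
      simpa using HasDerivAt.const_add p.2 ((hasDerivAt_id (0:ℝ)).smul_const (X p.1))
    exact (hasDerivAt_const (0:ℝ) p.1).prodMk h1
end
end

section
/- Let ω be a principal connection on the principal G-bundle π: M → M/G, with horizontal lift h. The horizontal lift H of the Vilms connection ω^C on Tπ: TM → T(M/G) satisfies (X̄^C)^H = (X̄^h)^C and (X̄^V)^H = (X̄^h)^V for every vector field X̄ on M/G. -/
/- STATEMENT 7: Let ω be a principal connection on π : M → M/G with horizontal lift h.
The horizontal lift H of the Vilms connection ω^C on Tπ : TM → T(M/G) satisfies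
(X̄^C)^H = (X̄^h)^C and (X̄^V)^H = (X̄^h)^V for every vector field X̄ on M/G.

Formalization: M = B × F in an adapted trivialization, π = fst, TM = M × M,
Tπ(m, v) = (m.1, v.1).  The connection is given by its horizontal-lift map
σ : M → L(B, F), so ω(m)(u, w) = (0, w − σ(m)u) is the vertical projector and
X̄^h(m) = (X̄(m.1), σ(m) X̄(m.1)).  The Vilms connection has vertical projector the
complete lift ω^C (the complete lift of a (1,1)-tensor), and the H-lift of a vector
field Ȳ on T(M/G) is the unique vector field Z on TM that is Tπ-related to Ȳ and
satisfies ω^C(Z) = 0.  The theorem: (X̄^h)^C is the H-lift of X̄^C and (X̄^h)^V is the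
H-lift of X̄^V. -/

noncomputable section

/-- Complete lift of a (1,1)-tensor field to TM = E × E. -/
def tenC {E : Type*} [NormedAddCommGroup E] [NormedSpace ℝ E]
    (A : E → E →L[ℝ] E) : E × E → (E × E) →L[ℝ] (E × E) :=
  fun p => ((A p.1).comp (ContinuousLinearMap.fst ℝ E E)).prod
    (((fderiv ℝ A p.1 p.2).comp (ContinuousLinearMap.fst ℝ E E)) +
      (A p.1).comp (ContinuousLinearMap.snd ℝ E E))

variable {B F : Type*} [NormedAddCommGroup B] [NormedSpace ℝ B]
  [NormedAddCommGroup F] [NormedSpace ℝ F]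

/-- The vertical projector ω of the principal connection with horizontal-lift map σ. -/
def connTensor (σ : (B × F) → (B →L[ℝ] F)) : (B × F) → (B × F) →L[ℝ] (B × F) :=
  fun m => (0 : (B × F) →L[ℝ] B).prod
    ((ContinuousLinearMap.snd ℝ B F) - (σ m).comp (ContinuousLinearMap.fst ℝ B F))

/-- The ω-horizontal lift X̄^h of a vector field X̄ on M/G. -/
def hLift (σ : (B × F) → (B →L[ℝ] F)) (Xb : B → B) : (B × F) → (B × F) :=
  fun m => (Xb m.1, σ m (Xb m.1))

/-- `Z` is the horizontal lift, for the Vilms connection ω^C, of the vector field `Ybar` on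
T(M/G): it is Tπ-related to `Ybar` and ω^C-horizontal. -/
def IsVilmsHorizontalLift (σ : (B × F) → (B →L[ℝ] F))
    (Z : (B × F) × (B × F) → (B × F) × (B × F)) (Ybar : B × B → B × B) : Prop :=
  (∀ p, tenC (connTensor σ) p (Z p) = 0) ∧
  (∀ p, ((Z p).1.1, (Z p).2.1) = Ybar (p.1.1, p.2.1))

namespace VilmsAux

open ContinuousLinearMap

def Psi (B F : Type*) [NormedAddCommGroup B] [NormedSpace ℝ B]
    [NormedAddCommGroup F] [NormedSpace ℝ F] :
    (B →L[ℝ] F) →L[ℝ] ((B × F) →L[ℝ] (B × F)) :=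
  ((compL ℝ (B × F) F (B × F)) (inr ℝ B F)).comp ((compL ℝ (B × F) B F).flip (fst ℝ B F))

@[simp] lemma Psi_apply (T : B →L[ℝ] F) (v : B × F) : Psi B F T v = (0, T v.1) := by
  simp [Psi]

lemma connTensor_eq (σ : (B × F) → (B →L[ℝ] F)) :
    connTensor σ = fun m => (inr ℝ B F).comp (snd ℝ B F) - Psi B F (σ m) := by
  funext m
  refine ContinuousLinearMap.ext fun v => ?_
  simp [connTensor, Prod.ext_iff]

lemma hasFDerivAt_connTensor (σ : (B × F) → (B →L[ℝ] F)) (hσ : ContDiff ℝ (⊤ : ℕ∞) σ) (m : B × F) :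
    HasFDerivAt (connTensor σ) (-((Psi B F).comp (fderiv ℝ σ m))) m := by
  rw [connTensor_eq]
  have hσd : HasFDerivAt σ (fderiv ℝ σ m) m := (hσ.differentiable (by simp) m).hasFDerivAt
  have h := (hasFDerivAt_const ((inr ℝ B F).comp (snd ℝ B F)) m).sub
    ((Psi B F).hasFDerivAt.comp m hσd)
  exact h.congr_fderiv (by simp)

lemma fderiv_connTensor_apply (σ : (B × F) → (B →L[ℝ] F)) (hσ : ContDiff ℝ (⊤ : ℕ∞) σ)
    (m v : B × F) (u : B × F) :
    fderiv ℝ (connTensor σ) m v u = (0, -(fderiv ℝ σ m v u.1)) := by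
  rw [(hasFDerivAt_connTensor σ hσ m).fderiv]
  simp [Prod.ext_iff]

lemma tenC_eq_zero_iff (σ : (B × F) → (B →L[ℝ] F)) (hσ : ContDiff ℝ (⊤ : ℕ∞) σ)
    (p : (B × F) × (B × F)) (v : (B × F) × (B × F)) :
    tenC (connTensor σ) p v = 0 ↔
      v.1.2 = σ p.1 v.1.1 ∧ v.2.2 = σ p.1 v.2.1 + fderiv ℝ σ p.1 p.2 v.1.1 := by
  have h1 : tenC (connTensor σ) p v =
      ((0, v.1.2 - σ p.1 v.1.1),
        ((0 : B), -(fderiv ℝ σ p.1 p.2 v.1.1)) + ((0 : B), v.2.2 - σ p.1 v.2.1)) := by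
    simp only [tenC, ContinuousLinearMap.prod_apply, ContinuousLinearMap.comp_apply,
      ContinuousLinearMap.add_apply, ContinuousLinearMap.coe_fst', ContinuousLinearMap.coe_snd',
      connTensor, ContinuousLinearMap.zero_apply, ContinuousLinearMap.sub_apply,
      fderiv_connTensor_apply σ hσ]
  rw [h1]
  constructor
  · intro h
    have := Prod.ext_iff.1 h
    simp only [Prod.ext_iff, Prod.mk_add_mk, Prod.fst_zero, Prod.snd_zero, add_zero,
      sub_eq_zero] at this
    refine ⟨this.1.2, ?_⟩
    have h2 := this.2.2
    linear_combination (norm := abel) h2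
  · rintro ⟨ha, hb⟩
    simp only [Prod.ext_iff, Prod.mk_add_mk, Prod.fst_zero, Prod.snd_zero, ha, hb]
    constructor
    · constructor <;> simp
    · constructor
      · simp
      · abel

lemma hasFDerivAt_hLift (σ : (B × F) → (B →L[ℝ] F)) (hσ : ContDiff ℝ (⊤ : ℕ∞) σ)
    (Xb : B → B) (hXb : ContDiff ℝ (⊤ : ℕ∞) Xb) (m : B × F) :
    HasFDerivAt (hLift σ Xb)
      (((fderiv ℝ Xb m.1).comp (fst ℝ B F)).prod
        ((σ m).comp ((fderiv ℝ Xb m.1).comp (fst ℝ B F)) + (fderiv ℝ σ m).flip (Xb m.1))) m := by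
  have h1 : HasFDerivAt (fun m : B × F => Xb m.1) ((fderiv ℝ Xb m.1).comp (fst ℝ B F)) m :=
    ((hXb.differentiable (by simp) m.1).hasFDerivAt).comp m (hasFDerivAt_fst)
  have hσd : HasFDerivAt σ (fderiv ℝ σ m) m := (hσ.differentiable (by simp) m).hasFDerivAt
  exact h1.prodMk (hσd.clm_apply h1)

lemma fderiv_hLift_apply (σ : (B × F) → (B →L[ℝ] F)) (hσ : ContDiff ℝ (⊤ : ℕ∞) σ)
    (Xb : B → B) (hXb : ContDiff ℝ (⊤ : ℕ∞) Xb) (m v : B × F) :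
    fderiv ℝ (hLift σ Xb) m v =
      (fderiv ℝ Xb m.1 v.1, σ m (fderiv ℝ Xb m.1 v.1) + fderiv ℝ σ m v (Xb m.1)) := by
  rw [(hasFDerivAt_hLift σ hσ Xb hXb m).fderiv]
  simp

lemma unique (σ : (B × F) → (B →L[ℝ] F)) (hσ : ContDiff ℝ (⊤ : ℕ∞) σ)
    (Ybar : B × B → B × B) (Z Z' : (B × F) × (B × F) → (B × F) × (B × F))
    (hZ : IsVilmsHorizontalLift σ Z Ybar) (hZ' : IsVilmsHorizontalLift σ Z' Ybar) :
    Z = Z' := by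
  obtain ⟨t1, r1⟩ := hZ
  obtain ⟨t2, r2⟩ := hZ'
  funext p
  obtain ⟨e1, e2⟩ := (tenC_eq_zero_iff σ hσ p _).1 (t1 p)
  obtain ⟨e1', e2'⟩ := (tenC_eq_zero_iff σ hσ p _).1 (t2 p)
  have hr : ((Z p).1.1, (Z p).2.1) = ((Z' p).1.1, (Z' p).2.1) := by rw [r1 p, r2 p]
  have ha : (Z p).1.1 = (Z' p).1.1 := (Prod.ext_iff.1 hr).1
  have hc : (Z p).2.1 = (Z' p).2.1 := (Prod.ext_iff.1 hr).2
  refine Prod.ext (Prod.ext ha ?_) (Prod.ext hc ?_)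
  · rw [e1, e1', ha]
  · rw [e2, e2', ha, hc]

end VilmsAux

theorem vilms_horizontal_lift_of_lifts
    (σ : (B × F) → (B →L[ℝ] F)) (hσ : ContDiff ℝ (⊤ : ℕ∞) σ)
    (Xb : B → B) (hXb : ContDiff ℝ (⊤ : ℕ∞) Xb) :
    -- (X̄^C)^H = (X̄^h)^C
    (IsVilmsHorizontalLift σ (cLift (hLift σ Xb)) (cLift Xb) ∧
      ∀ Z, IsVilmsHorizontalLift σ Z (cLift Xb) → Z = cLift (hLift σ Xb)) ∧
    -- (X̄^V)^H = (X̄^h)^V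
    (IsVilmsHorizontalLift σ (vLift (hLift σ Xb)) (vLift Xb) ∧
      ∀ Z, IsVilmsHorizontalLift σ Z (vLift Xb) → Z = vLift (hLift σ Xb)) := by
  have hc : IsVilmsHorizontalLift σ (cLift (hLift σ Xb)) (cLift Xb) := by
    constructor
    · intro p
      rw [VilmsAux.tenC_eq_zero_iff σ hσ]
      constructor
      · simp [cLift, hLift]
      · simp only [cLift, VilmsAux.fderiv_hLift_apply σ hσ Xb hXb, hLift]
    · intro p
      simp [cLift, VilmsAux.fderiv_hLift_apply σ hσ Xb hXb, hLift]
  have hv : IsVilmsHorizontalLift σ (vLift (hLift σ Xb)) (vLift Xb) := by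
    constructor
    · intro p
      rw [VilmsAux.tenC_eq_zero_iff σ hσ]
      simp [vLift, hLift]
    · intro p
      simp [vLift, hLift]
  exact ⟨⟨hc, fun Z hZ => VilmsAux.unique σ hσ _ Z _ hZ hc⟩,
    ⟨hv, fun Z hZ => VilmsAux.unique σ hσ _ Z _ hZ hv⟩⟩
end
end

section
/- Let ω be a principal connection on π: M → M/G with vertical connection Ω on TM (defined by Ω(X_i^C) = 0, Ω(X_i^V) = 0, Ω(Ẽ_a^C) = Ẽ_a^C, Ω(Ẽ_a^V) = 0). For any SODE Γ_0 on M, the vector field X_ω = Ω(Γ_0) is independent of the choice of Γ_0; it equals v^a Ẽ_a^C, is Tπ-vertical, and is G-invariant but not TG-invariant. -/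
/- STATEMENT 8: Let ω be a principal connection on π : M → M/G with vertical connection Ω on
TM (Ω(X_i^C) = 0, Ω(X_i^V) = 0, Ω(Ẽ_a^C) = Ẽ_a^C, Ω(Ẽ_a^V) = 0).  For any SODE Γ₀ on M the
vector field X_ω = Ω(Γ₀) is independent of the choice of Γ₀; it equals v^a Ẽ_a^C, is
Tπ-vertical, and is G-invariant but not TG-invariant.

Formalization: M = B × F in an adapted trivialization, π = fst, TM = M × M.  The fundamental
vector fields Ẽ_a are π-vertical, pointwise independent, with [Ẽ_a, Ẽ_b] = −C^c_{ab} Ẽ_c.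
The connection map is ϖ : M → L(M, 𝔤), 𝔤 ≅ ℝ^k, with ϖ_m(Ẽ_a(m)) = E_a, and the
quasi-velocities are v^a(p) = ϖ(p)^a.  The vertical connection is
Ω_p(W) = ∑_a (ϖ_{τ(p)} (Tτ W))^a Ẽ_a^C(p)  (ϖ^V = τ*ϖ), so Ω_p(W) depends only on the
Tτ-projection W₁ of W.  G-invariance is [X_ω, Ẽ_b^C] = 0; failure of TG-invariance is
witnessed by [X_ω, Ẽ_b^V] = −(v^a C^c_{ab} Ẽ_c^V + Ẽ_b^C) ≠ 0. -/

noncomputable section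

def lieVF {E : Type*} [NormedAddCommGroup E] [NormedSpace ℝ E]
    (X Y : E → E) : E → E :=
  fun x => fderiv ℝ Y x (X x) - fderiv ℝ X x (Y x)

section Helpers
variable {V : Type*} [NormedAddCommGroup V] [NormedSpace ℝ V]

lemma my_diff {X : V → V} (hX : ContDiff ℝ (⊤ : ℕ∞) X) : Differentiable ℝ X :=
  hX.differentiable (by simp)

lemma my_diff_fderiv {X : V → V} (hX : ContDiff ℝ (⊤ : ℕ∞) X) :
    Differentiable ℝ (fderiv ℝ X) := by
  have h1 : ContDiff ℝ ((⊤:ℕ∞) : WithTop ℕ∞) X := hX.of_le (by simp)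
  exact ((contDiff_infty_iff_fderiv.mp h1).2).differentiable (by simp)

lemma my_symm {X : V → V} (hX : ContDiff ℝ (⊤ : ℕ∞) X) (m v w : V) :
    fderiv ℝ (fderiv ℝ X) m v w = fderiv ℝ (fderiv ℝ X) m w v :=
  second_derivative_symmetric (fun y => (my_diff hX y).hasFDerivAt)
    ((my_diff_fderiv hX m).hasFDerivAt) v w

lemma hasFDerivAt_cLift {X : V → V} (hX : ContDiff ℝ (⊤ : ℕ∞) X) (p : V × V) :
    HasFDerivAt (cLift X)
      (((fderiv ℝ X p.1).comp (ContinuousLinearMap.fst ℝ V V)).prod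
        ((fderiv ℝ X p.1).comp (ContinuousLinearMap.snd ℝ V V)
          + (((fderiv ℝ (fderiv ℝ X) p.1).comp (ContinuousLinearMap.fst ℝ V V)).flip p.2))) p := by
  have h1 : HasFDerivAt (fun q : V × V => X q.1)
      ((fderiv ℝ X p.1).comp (ContinuousLinearMap.fst ℝ V V)) p :=
    ((my_diff hX p.1).hasFDerivAt).comp p hasFDerivAt_fst
  have hc : HasFDerivAt (fun q : V × V => fderiv ℝ X q.1)
      ((fderiv ℝ (fderiv ℝ X) p.1).comp (ContinuousLinearMap.fst ℝ V V)) p :=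
    ((my_diff_fderiv hX p.1).hasFDerivAt).comp p hasFDerivAt_fst
  exact h1.prodMk (hc.clm_apply hasFDerivAt_snd)

lemma fderiv_cLift_apply {X : V → V} (hX : ContDiff ℝ (⊤ : ℕ∞) X) (p W : V × V) :
    fderiv ℝ (cLift X) p W =
      (fderiv ℝ X p.1 W.1,
        fderiv ℝ X p.1 W.2 + fderiv ℝ (fderiv ℝ X) p.1 W.1 p.2) := by
  rw [(hasFDerivAt_cLift hX p).fderiv]; rfl

lemma hasFDerivAt_vLift {X : V → V} (hX : ContDiff ℝ (⊤ : ℕ∞) X) (p : V × V) :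
    HasFDerivAt (vLift X)
      ((0 : (V × V) →L[ℝ] V).prod ((fderiv ℝ X p.1).comp (ContinuousLinearMap.fst ℝ V V))) p :=
  (hasFDerivAt_const (0 : V) p).prodMk (((my_diff hX p.1).hasFDerivAt).comp p hasFDerivAt_fst)

lemma fderiv_vLift_apply {X : V → V} (hX : ContDiff ℝ (⊤ : ℕ∞) X) (p W : V × V) :
    fderiv ℝ (vLift X) p W = (0, fderiv ℝ X p.1 W.1) := by
  rw [(hasFDerivAt_vLift hX p).fderiv]; rfl

lemma key_alg {k : ℕ} (C : Fin k → Fin k → Fin k → ℝ) (g : Fin k → ℝ)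
    (Z X Y : Fin k → V) (b : Fin k)
    (hXY : ∀ a, X a - Y a = -∑ c, C c a b • Z c)
    (hC : ∀ a c, C c b a = -C c a b) :
    ∑ a, g a • X a - ∑ a, (g a • Y a + (∑ d, C a b d * g d) • Z a) = 0 := by
  rw [Finset.sum_add_distrib, ← sub_sub, ← Finset.sum_sub_distrib]
  have h1 : ∑ a, (g a • X a - g a • Y a) = -∑ a, ∑ c, (g a * C c a b) • Z c := by
    rw [← Finset.sum_neg_distrib]
    refine Finset.sum_congr rfl fun a _ => ?_
    rw [← smul_sub, hXY a, smul_neg, Finset.smul_sum, ← Finset.sum_neg_distrib]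
    simp [smul_smul]
  have h2 : ∑ a, (∑ d, C a b d * g d) • Z a = -∑ a, ∑ c, (g a * C c a b) • Z c := by
    simp_rw [Finset.sum_smul]
    rw [Finset.sum_comm, ← Finset.sum_neg_distrib]
    refine Finset.sum_congr rfl fun a _ => ?_
    rw [← Finset.sum_neg_distrib]
    refine Finset.sum_congr rfl fun c _ => ?_
    rw [hC, neg_mul, mul_comm (C c a b) (g a), neg_smul]
  rw [h1, h2, sub_neg_eq_add, neg_add_cancel]

end Helpers

variable {B F : Type*} [NormedAddCommGroup B] [NormedSpace ℝ B]
  [NormedAddCommGroup F] [NormedSpace ℝ F] {k : ℕ}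

/-- The vertical connection Ω = ϖ^V = τ*ϖ, as a (1,1)-tensor on TM = M × M:
its value on W ∈ T_p(TM) is ∑_a ϖ(τ(p))(W₁)^a Ẽ_a^C(p). -/
def vertConn (Efld : Fin k → (B × F) → (B × F))
    (ϖ : (B × F) → ((B × F) →L[ℝ] (Fin k → ℝ)))
    (p : (B × F) × (B × F)) (W : (B × F) × (B × F)) : (B × F) × (B × F) :=
  ∑ a, (ϖ p.1 W.1) a • cLift (Efld a) p

/-- X_ω = v^a Ẽ_a^C. -/
def Xomega (Efld : Fin k → (B × F) → (B × F))
    (ϖ : (B × F) → ((B × F) →L[ℝ] (Fin k → ℝ))) :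
    (B × F) × (B × F) → (B × F) × (B × F) :=
  fun p => ∑ a, (ϖ p.1 p.2) a • cLift (Efld a) p

set_option maxHeartbeats 2000000 in
theorem Xomega_wellDefined_vertical_invariance
    (Efld : Fin k → (B × F) → (B × F))
    (hEvert : ∀ a m, (Efld a m).1 = 0)
    (hEsmooth : ∀ a, ContDiff ℝ (⊤ : ℕ∞) (Efld a))
    (hind : ∀ m : B × F, LinearIndependent ℝ (fun a => Efld a m))
    (C : Fin k → Fin k → Fin k → ℝ)
    (hbra : ∀ a b, lieVF (Efld a) (Efld b) = fun m => -∑ c, C c a b • Efld c m)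
    (ϖ : (B × F) → ((B × F) →L[ℝ] (Fin k → ℝ)))
    (hϖsmooth : ContDiff ℝ (⊤ : ℕ∞) ϖ)
    -- ϖ is a connection map: ϖ(Ẽ_a) = E_a
    (hϖE : ∀ a m, ϖ m (Efld a m) = Pi.single a 1)
    -- infinitesimal equivariance of the principal connection ϖ
    (hϖequiv : ∀ a (Y : (B × F) → (B × F)), ContDiff ℝ (⊤ : ℕ∞) Y → ∀ m c,
      fderiv ℝ (fun m' => (ϖ m' (Y m')) c) m (Efld a m)
        - (ϖ m (lieVF (Efld a) Y m)) c
      = ∑ d, C c a d * (ϖ m (Y m)) d) :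
    -- Ω(Γ₀) is independent of the choice of the SODE Γ₀ and equals X_ω = v^a Ẽ_a^C
    (∀ Γ₀ : ((B × F) × (B × F)) → ((B × F) × (B × F)), (∀ p, (Γ₀ p).1 = p.2) →
      (fun p => vertConn Efld ϖ p (Γ₀ p)) = Xomega Efld ϖ) ∧
    -- X_ω is Tπ-vertical
    (∀ p, ((Xomega Efld ϖ p).1.1, (Xomega Efld ϖ p).2.1) = (0, 0)) ∧
    -- X_ω is G-invariant
    (∀ b, lieVF (Xomega Efld ϖ) (cLift (Efld b)) = 0) ∧
    -- but not TG-invariant: [X_ω, Ẽ_b^V] = −(v^a C^c_{ab} Ẽ_c^V + Ẽ_b^C) ≠ 0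
    (∀ b, lieVF (Xomega Efld ϖ) (vLift (Efld b)) =
        (fun p => -((∑ a, ∑ c, ((ϖ p.1 p.2) a * C c a b) • vLift (Efld c) p)
          + cLift (Efld b) p)) ∧
      lieVF (Xomega Efld ϖ) (vLift (Efld b)) ≠ 0) := by
  have hdiffE : ∀ a, Differentiable ℝ (Efld a) := fun a => my_diff (hEsmooth a)
  have hdiffDE : ∀ a, Differentiable ℝ (fderiv ℝ (Efld a)) := fun a => my_diff_fderiv (hEsmooth a)
  have hdiffϖ : Differentiable ℝ ϖ := hϖsmooth.differentiable (by simp)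
  -- antisymmetry of the structure constants
  have hC : ∀ a b c, C c b a = -C c a b := by
    intro a b c
    have h1 : ∀ m, (∑ e, (C e a b + C e b a) • Efld e m) = 0 := by
      intro m
      have ha := congrFun (hbra a b) m
      have hb := congrFun (hbra b a) m
      simp only [lieVF] at ha hb
      have : (-∑ c, C c a b • Efld c m) + (-∑ c, C c b a • Efld c m) = 0 := by
        rw [← ha, ← hb]; abel
      rw [← neg_add, neg_eq_zero, ← Finset.sum_add_distrib] at this
      simpa [add_smul] using this
    have := Fintype.linearIndependent_iff.mp (hind 0) (fun e => C e a b + C e b a) (h1 0) c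
    linarith
  -- verticality of the derivative of the fundamental fields
  have hDEvert : ∀ a (m u : B × F), (fderiv ℝ (Efld a) m u).1 = 0 := by
    intro a m u
    have h1 : HasFDerivAt (fun x => (Efld a x).1)
        ((ContinuousLinearMap.fst ℝ B F).comp (fderiv ℝ (Efld a) m)) m :=
      ((ContinuousLinearMap.fst ℝ B F).hasFDerivAt).comp m (hdiffE a m).hasFDerivAt
    have h2 : HasFDerivAt (fun x : B × F => (Efld a x).1) (0 : (B × F) →L[ℝ] B) m := by
      have he : (fun x : B × F => (Efld a x).1) = fun _ => (0 : B) := funext (hEvert a)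
      rw [he]; exact hasFDerivAt_const _ _
    have h3 := h1.unique h2
    have : ((ContinuousLinearMap.fst ℝ B F).comp (fderiv ℝ (Efld a) m)) u = 0 := by
      rw [h3]; rfl
    simpa using this
  -- pointwise bracket identity
  have hlie : ∀ a b (m : B × F),
      fderiv ℝ (Efld b) m (Efld a m) - fderiv ℝ (Efld a) m (Efld b m)
        = -∑ c, C c a b • Efld c m := fun a b m => congrFun (hbra a b) m
  -- derivative of the bracket identity
  have hlieD : ∀ a b (m u : B × F),
      (fderiv ℝ (Efld b) m (fderiv ℝ (Efld a) m u)
          + fderiv ℝ (fderiv ℝ (Efld b)) m u (Efld a m))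
        - (fderiv ℝ (Efld a) m (fderiv ℝ (Efld b) m u)
          + fderiv ℝ (fderiv ℝ (Efld a)) m u (Efld b m))
      = -∑ c, C c a b • fderiv ℝ (Efld c) m u := by
    intro a b m u
    have hL : HasFDerivAt (lieVF (Efld a) (Efld b))
        ((((fderiv ℝ (Efld b) m).comp (fderiv ℝ (Efld a) m)
            + (fderiv ℝ (fderiv ℝ (Efld b)) m).flip (Efld a m))
          - ((fderiv ℝ (Efld a) m).comp (fderiv ℝ (Efld b) m)
            + (fderiv ℝ (fderiv ℝ (Efld a)) m).flip (Efld b m)))) m := by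
      exact (((hdiffDE b m).hasFDerivAt.clm_apply (hdiffE a m).hasFDerivAt).sub
        ((hdiffDE a m).hasFDerivAt.clm_apply (hdiffE b m).hasFDerivAt))
    have hR : HasFDerivAt (fun m => -∑ c, C c a b • Efld c m)
        (-∑ c, C c a b • fderiv ℝ (Efld c) m) m := by
      exact (HasFDerivAt.fun_sum (fun c _ => ((hdiffE c m).hasFDerivAt.const_smul (C c a b)))).neg
    rw [hbra a b] at hL
    have h3 := hL.unique hR
    have h4 := DFunLike.congr_fun h3 u
    simpa using h4
  -- equivariance consequence
  have hkey : ∀ a b (m u : B × F),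
      (ϖ m (fderiv ℝ (Efld b) m u)) a + (fderiv ℝ ϖ m (Efld b m) u) a
        = ∑ d, C a b d * (ϖ m u) d := by
    intro a b m u
    have h := hϖequiv b (fun _ => u) contDiff_const m a
    have hfd : fderiv ℝ (fun m' => (ϖ m' u) a) m
        = (ContinuousLinearMap.proj (R := ℝ) (φ := fun _ : Fin k => ℝ) a).comp
            ((ϖ m).comp (0 : (B × F) →L[ℝ] (B × F)) + (fderiv ℝ ϖ m).flip u) := by
      refine HasFDerivAt.fderiv ?_
      exact ((ContinuousLinearMap.proj (R := ℝ) (φ := fun _ : Fin k => ℝ) a).hasFDerivAt).comp m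
        ((hdiffϖ m).hasFDerivAt.clm_apply (hasFDerivAt_const u m))
    have hlv : lieVF (Efld b) (fun _ => u) m = -(fderiv ℝ (Efld b) m u) := by
      simp [lieVF]
    rw [hfd, hlv] at h
    simp only [ContinuousLinearMap.coe_comp', Function.comp_apply,
      ContinuousLinearMap.add_apply, ContinuousLinearMap.comp_zero,
      ContinuousLinearMap.zero_apply, ContinuousLinearMap.flip_apply,
      ContinuousLinearMap.proj_apply, map_neg, Pi.neg_apply, zero_add, sub_neg_eq_add] at h
    linarith [h]
  -- derivative of Xomega
  have hXder : ∀ p : (B × F) × (B × F), HasFDerivAt (Xomega Efld ϖ)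
      (∑ a, ((ϖ p.1 p.2) a •
          (((fderiv ℝ (Efld a) p.1).comp (ContinuousLinearMap.fst ℝ (B × F) (B × F))).prod
            ((fderiv ℝ (Efld a) p.1).comp (ContinuousLinearMap.snd ℝ (B × F) (B × F))
              + (((fderiv ℝ (fderiv ℝ (Efld a)) p.1).comp
                  (ContinuousLinearMap.fst ℝ (B × F) (B × F))).flip p.2)))
        + ((ContinuousLinearMap.proj (R := ℝ) (φ := fun _ : Fin k => ℝ) a).comp
            ((ϖ p.1).comp (ContinuousLinearMap.snd ℝ (B × F) (B × F))
              + ((fderiv ℝ ϖ p.1).comp (ContinuousLinearMap.fst ℝ (B × F) (B × F))).flip p.2)).smulRight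
            (cLift (Efld a) p))) p := by
    intro p
    refine HasFDerivAt.fun_sum (fun a _ => ?_)
    have hg : HasFDerivAt (fun q : (B × F) × (B × F) => (ϖ q.1 q.2) a)
        ((ContinuousLinearMap.proj (R := ℝ) (φ := fun _ : Fin k => ℝ) a).comp
          ((ϖ p.1).comp (ContinuousLinearMap.snd ℝ (B × F) (B × F))
            + ((fderiv ℝ ϖ p.1).comp (ContinuousLinearMap.fst ℝ (B × F) (B × F))).flip p.2)) p := by
      refine ((ContinuousLinearMap.proj (R := ℝ) (φ := fun _ : Fin k => ℝ) a).hasFDerivAt).comp p ?_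
      exact (((hdiffϖ p.1).hasFDerivAt).comp p hasFDerivAt_fst).clm_apply hasFDerivAt_snd
    exact hg.smul (hasFDerivAt_cLift (hEsmooth a) p)
  have hXfd : ∀ (p W : (B × F) × (B × F)),
      fderiv ℝ (Xomega Efld ϖ) p W
        = ∑ a, ((ϖ p.1 p.2) a • (fderiv ℝ (Efld a) p.1 W.1,
              fderiv ℝ (Efld a) p.1 W.2 + fderiv ℝ (fderiv ℝ (Efld a)) p.1 W.1 p.2)
            + ((ϖ p.1 W.2) a + (fderiv ℝ ϖ p.1 W.1 p.2) a) • cLift (Efld a) p) := by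
    intro p W
    rw [(hXder p).fderiv]
    rw [ContinuousLinearMap.sum_apply]
    refine Finset.sum_congr rfl fun a _ => ?_
    rfl
  -- values of Xomega
  have hXval : ∀ p : (B × F) × (B × F),
      Xomega Efld ϖ p = (∑ a, (ϖ p.1 p.2) a • Efld a p.1,
        ∑ a, (ϖ p.1 p.2) a • fderiv ℝ (Efld a) p.1 p.2) := by
    intro p
    unfold Xomega
    rw [Prod.ext_iff]
    constructor
    · rw [Prod.fst_sum]; rfl
    · rw [Prod.snd_sum]; rfl
  refine ⟨?_, ?_, ?_, ?_⟩
  · -- part 1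
    intro Γ₀ hΓ
    funext p
    unfold vertConn Xomega
    rw [hΓ p]
  · -- part 2
    intro p
    rw [hXval p]
    simp only [Prod.fst_sum, Prod.smul_fst]
    rw [Prod.mk.injEq]
    constructor
    · rw [Finset.sum_congr rfl fun a _ => by rw [hEvert a p.1, smul_zero]]
      simp
    · rw [Finset.sum_congr rfl fun a _ => by rw [hDEvert a p.1 p.2, smul_zero]]
      simp
  · -- part 3
    intro b
    funext p
    simp only [lieVF, Pi.zero_apply]
    rw [fderiv_cLift_apply (hEsmooth b), hXfd, hXval p]
    dsimp only
    have hS1 : fderiv ℝ (Efld b) p.1 (∑ a, (ϖ p.1 p.2) a • Efld a p.1)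
        = ∑ a, (ϖ p.1 p.2) a • fderiv ℝ (Efld b) p.1 (Efld a p.1) := by
      simp [map_sum, map_smul]
    have hS2 : fderiv ℝ (Efld b) p.1 (∑ a, (ϖ p.1 p.2) a • fderiv ℝ (Efld a) p.1 p.2)
        = ∑ a, (ϖ p.1 p.2) a • fderiv ℝ (Efld b) p.1 (fderiv ℝ (Efld a) p.1 p.2) := by
      simp [map_sum, map_smul]
    have hD2 : fderiv ℝ (fderiv ℝ (Efld b)) p.1 (∑ a, (ϖ p.1 p.2) a • Efld a p.1) p.2
        = ∑ a, (ϖ p.1 p.2) a • fderiv ℝ (fderiv ℝ (Efld b)) p.1 p.2 (Efld a p.1) := by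
      rw [map_sum, ContinuousLinearMap.sum_apply]
      refine Finset.sum_congr rfl fun a _ => ?_
      rw [map_smul, ContinuousLinearMap.smul_apply, my_symm (hEsmooth b)]
    rw [hS1, hS2, hD2]
    have hcoef : ∀ a : Fin k, (ϖ p.1 ((cLift (Efld b) p).2)) a
          + (fderiv ℝ ϖ p.1 ((cLift (Efld b) p).1) p.2) a
        = ∑ d, C a b d * (ϖ p.1 p.2) d := fun a => hkey a b p.1 p.2
    have hD2a : ∀ a : Fin k, fderiv ℝ (fderiv ℝ (Efld a)) p.1 ((cLift (Efld b) p).1) p.2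
        = fderiv ℝ (fderiv ℝ (Efld a)) p.1 p.2 (Efld b p.1) := fun a =>
      my_symm (hEsmooth a) p.1 _ _
    simp only [hcoef, hD2a]
    rw [Prod.ext_iff]
    simp only [Prod.fst_sub, Prod.fst_sum, Prod.fst_add, Prod.smul_fst,
      Prod.snd_sub, Prod.snd_sum, Prod.snd_add, Prod.smul_snd,
      Prod.fst_zero, Prod.snd_zero, cLift]
    constructor
    · exact key_alg C (fun a => (ϖ p.1 p.2) a) (fun c => Efld c p.1)
        (fun a => fderiv ℝ (Efld b) p.1 (Efld a p.1))
        (fun a => fderiv ℝ (Efld a) p.1 (Efld b p.1)) b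
        (fun a => hlie a b p.1) (fun a c => hC a b c)
    · rw [← Finset.sum_add_distrib]
      rw [Finset.sum_congr rfl fun a _ => (smul_add ((ϖ p.1 p.2) a)
        (fderiv ℝ (Efld b) p.1 (fderiv ℝ (Efld a) p.1 p.2))
        (fderiv ℝ (fderiv ℝ (Efld b)) p.1 p.2 (Efld a p.1))).symm]
      exact key_alg C (fun a => (ϖ p.1 p.2) a) (fun c => fderiv ℝ (Efld c) p.1 p.2)
        (fun a => fderiv ℝ (Efld b) p.1 (fderiv ℝ (Efld a) p.1 p.2)
          + fderiv ℝ (fderiv ℝ (Efld b)) p.1 p.2 (Efld a p.1))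
        (fun a => fderiv ℝ (Efld a) p.1 (fderiv ℝ (Efld b) p.1 p.2)
          + fderiv ℝ (fderiv ℝ (Efld a)) p.1 p.2 (Efld b p.1)) b
        (fun a => hlieD a b p.1 p.2) (fun a c => hC a b c)
  · -- part 4
    intro b
    have hmain : lieVF (Xomega Efld ϖ) (vLift (Efld b)) =
        (fun p => -((∑ a, ∑ c, ((ϖ p.1 p.2) a * C c a b) • vLift (Efld c) p)
          + cLift (Efld b) p)) := by
      funext p
      simp only [lieVF]
      rw [fderiv_vLift_apply (hEsmooth b), hXfd, hXval p]
      dsimp only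
      have hW1 : (vLift (Efld b) p).1 = (0 : B × F) := rfl
      have hW2 : (vLift (Efld b) p).2 = Efld b p.1 := rfl
      simp only [hW1, hW2, map_zero, ContinuousLinearMap.zero_apply, hϖE b p.1,
        Pi.zero_apply, add_zero]
      have hS1 : fderiv ℝ (Efld b) p.1 (∑ a, (ϖ p.1 p.2) a • Efld a p.1)
          = ∑ a, (ϖ p.1 p.2) a • fderiv ℝ (Efld b) p.1 (Efld a p.1) := by
        simp [map_sum, map_smul]
      rw [hS1, Finset.sum_add_distrib]
      have hsingle : (∑ a, (Pi.single b (1:ℝ) : Fin k → ℝ) a • cLift (Efld a) p) = cLift (Efld b) p := by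
        simp [Pi.single_apply, ite_smul]
      rw [hsingle]
      have hmid : (∑ a, (ϖ p.1 p.2) a • ((0 : B × F), fderiv ℝ (Efld a) p.1 (Efld b p.1)))
            - ((0 : B × F), ∑ a, (ϖ p.1 p.2) a • fderiv ℝ (Efld b) p.1 (Efld a p.1))
          = ∑ a, ∑ c, ((ϖ p.1 p.2) a * C c a b) • vLift (Efld c) p := by
        rw [Prod.ext_iff]
        simp only [Prod.fst_sub, Prod.fst_sum, Prod.smul_fst, Prod.snd_sub, Prod.snd_sum,
          Prod.smul_snd, vLift, smul_zero, Finset.sum_const_zero, sub_zero]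
        constructor
        · simp
        · rw [← Finset.sum_sub_distrib]
          have : ∀ a : Fin k, (ϖ p.1 p.2) a • fderiv ℝ (Efld a) p.1 (Efld b p.1)
                - (ϖ p.1 p.2) a • fderiv ℝ (Efld b) p.1 (Efld a p.1)
              = ∑ c, ((ϖ p.1 p.2) a * C c a b) • Efld c p.1 := by
            intro a
            rw [← smul_sub, ← neg_sub (fderiv ℝ (Efld b) p.1 (Efld a p.1)), smul_neg,
              hlie a b p.1]
            simp [Finset.smul_sum, smul_smul]
          exact Finset.sum_congr rfl fun a _ => this a
      rw [← hmid]
      abel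
    refine ⟨hmain, ?_⟩
    intro h0
    rw [h0] at hmain
    have h2 := congrFun hmain ((0 : B × F), (0 : B × F))
    simp only [Pi.zero_apply, map_zero, zero_mul, zero_smul, Finset.sum_const_zero,
      zero_add] at h2
    have h3 := congrArg Prod.fst h2
    simp only [Prod.fst_neg, Prod.fst_zero, cLift] at h3
    exact (hind 0).ne_zero b (neg_eq_zero.mp h3.symm)
end
end

section
/- Let Γ̄ be a SODE on M/G and Γ an un-reduction of Γ̄ on TM along Tπ. Let ϖ: TM → 𝔤 be the connection map of a principal connection and ϖ^V = τ_M^* ϖ the vertical connection. Then Γ is a SODE on M if and only if ϖ^V ∘ Γ = ϖ. -/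
theorem fst_apply_eq_snd_of_isUnreduction {M N : Type*} (π : M → N)
    {Γ : M × M → M × M} {Γbar : N × N → N × N} (hbarsode : ∀ q, (Γbar q).1 = q.2)
    (hrel : ∀ p, (π (Γ p).1, π (Γ p).2) = Γbar (π p.1, π p.2)) (p : M × M) :
    π (Γ p).1 = π p.2 := by
  simpa only [hbarsode] using congrArg Prod.fst (hrel p)

theorem sode_iff_vertical_connection_condition
    {B F : Type*} [NormedAddCommGroup B] [NormedSpace ℝ B]
    [NormedAddCommGroup F] [NormedSpace ℝ F]
    (σ : (B × F) → (B →L[ℝ] F))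
    (Γ : ((B × F) × (B × F)) → ((B × F) × (B × F)))
    (Γbar : B × B → B × B)
    -- Γ̄ is a SODE on M/G
    (hbarsode : ∀ q : B × B, (Γbar q).1 = q.2)
    -- Γ is an un-reduction of Γ̄
    (hrel : ∀ p, ((Γ p).1.1, (Γ p).2.1) = Γbar (p.1.1, p.2.1)) :
    -- Γ is a SODE  ↔  ϖ^V ∘ Γ = ϖ
    (∀ p, (Γ p).1 = p.2) ↔
      (∀ p : (B × F) × (B × F),
        (Γ p).1.2 - σ p.1 ((Γ p).1.1) = p.2.2 - σ p.1 p.2.1) := by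
  have hbase : ∀ p, (Γ p).1.1 = p.2.1 :=
    fst_apply_eq_snd_of_isUnreduction Prod.fst hbarsode hrel
  simp only [Prod.ext_iff, hbase, sub_left_inj, true_and]
end

section
/- Let Γ̄ be a SODE on M/G with primary un-reduced SODE Γ_1, and let V be a vector field on TM that is Tπ-vertical and satisfies Ω(V) = 0 (equivalently V = V^a Ẽ_a^V). Then Γ_2 = Γ_1 + V is a SODE on M whose base integral curves project onto those of Γ̄. Moreover, Γ_2 is G-invariant if and only if Ẽ_a^C(V^b) = C^b_{ad} V^d. -/
/- STATEMENT 15: Let Γ̄ be a SODE on M/G with primary un-reduced SODE Γ₁, and let V be a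
vector field on TM that is Tπ-vertical with Ω(V) = 0 (equivalently V = V^a Ẽ_a^V).  Then
Γ₂ = Γ₁ + V is a SODE on M whose base integral curves project onto those of Γ̄.  Moreover Γ₂
is G-invariant if and only if Ẽ_a^C(V^b) = C^b_{ad} V^d.

Formalization: M = B × F in an adapted trivialization, π = fst, TM = M × M.  The fundamental
vector fields Ẽ_a are π-vertical, pointwise independent, with [Ẽ_a, Ẽ_b] = −C^c_{ab} Ẽ_c;
ϖ is the connection map, with quasi-velocities v^a(q) = ϖ(q.1)(q.2)^a.  Γ₁ is characterized
as the primary un-reduced SODE: a G-invariant SODE, Tπ-related to Γ̄, with Γ₁(v^a) = 0.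
V = ∑_a V^a Ẽ_a^V, and G-invariance of Γ₂ is [Γ₂, Ẽ_a^C] = 0 for all a. -/

noncomputable section

section helpers

variable {E : Type*} [NormedAddCommGroup E] [NormedSpace ℝ E]

lemma vLift_hasFDerivAt (X : E → E) (hX : Differentiable ℝ X) (p : E × E) :
    HasFDerivAt (vLift X)
      ((0 : (E × E) →L[ℝ] E).prod
        ((fderiv ℝ X p.1).comp (ContinuousLinearMap.fst ℝ E E))) p :=
  (hasFDerivAt_const (0 : E) p).prodMk ((hX p.1).hasFDerivAt.comp p hasFDerivAt_fst)

lemma cLift_hasFDerivAt (X : E → E) (hX : ContDiff ℝ (⊤ : ℕ∞) X) (p : E × E) :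
    ∃ L : (E × E) →L[ℝ] (E × E), HasFDerivAt (cLift X) L p ∧
      ∀ s : E, L (0, s) = (0, fderiv ℝ X p.1 s) := by
  have hX1 : Differentiable ℝ X := hX.differentiable (by simp)
  have hfd : Differentiable ℝ (fderiv ℝ X) :=
    (hX.fderiv_right (m := 1) (by norm_cast)).differentiable one_ne_zero
  have hc : HasFDerivAt (fun q : E × E => fderiv ℝ X q.1)
      ((fderiv ℝ (fderiv ℝ X) p.1).comp (ContinuousLinearMap.fst ℝ E E)) p :=
    (hfd p.1).hasFDerivAt.comp p hasFDerivAt_fst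
  have hu : HasFDerivAt (fun q : E × E => q.2) (ContinuousLinearMap.snd ℝ E E) p :=
    hasFDerivAt_snd
  have h2 := hc.clm_apply hu
  have h1 : HasFDerivAt (fun q : E × E => X q.1)
      ((fderiv ℝ X p.1).comp (ContinuousLinearMap.fst ℝ E E)) p :=
    (hX1 p.1).hasFDerivAt.comp p hasFDerivAt_fst
  refine ⟨_, h1.prodMk h2, ?_⟩
  intro s
  simp

end helpers

theorem unreduced_sode_plus_vertical
    {B F : Type*} [NormedAddCommGroup B] [NormedSpace ℝ B]
    [NormedAddCommGroup F] [NormedSpace ℝ F] {k : ℕ}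
    (Efld : Fin k → (B × F) → (B × F))
    (hEvert : ∀ a m, (Efld a m).1 = 0)
    (hEsmooth : ∀ a, ContDiff ℝ (⊤ : ℕ∞) (Efld a))
    (hind : ∀ m : B × F, LinearIndependent ℝ (fun a => Efld a m))
    (C : Fin k → Fin k → Fin k → ℝ)
    (hbra : ∀ a b, lieVF (Efld a) (Efld b) = fun m => -∑ c, C c a b • Efld c m)
    (ϖ : (B × F) → ((B × F) →L[ℝ] (Fin k → ℝ)))
    (hϖsmooth : ContDiff ℝ (⊤ : ℕ∞) ϖ)
    (hϖE : ∀ a m, ϖ m (Efld a m) = Pi.single a 1)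
    -- Γ̄, a SODE on M/G
    (Γbar : B × B → B × B) (hbarsode : ∀ q, (Γbar q).1 = q.2)
    -- Γ₁, the primary un-reduced SODE of (Γ̄, ω)
    (Γ1 : ((B × F) × (B × F)) → ((B × F) × (B × F)))
    (hΓ1smooth : ContDiff ℝ (⊤ : ℕ∞) Γ1)
    (hΓ1sode : ∀ p, (Γ1 p).1 = p.2)
    (hΓ1rel : ∀ p, ((Γ1 p).1.1, (Γ1 p).2.1) = Γbar (p.1.1, p.2.1))
    (hΓ1inv : ∀ a, lieVF Γ1 (cLift (Efld a)) = 0)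
    (hΓ1prim : ∀ p a,
      fderiv ℝ (fun q : (B × F) × (B × F) => (ϖ q.1 q.2) a) p (Γ1 p) = 0)
    -- the vertical field V = V^a Ẽ_a^V  (Tπ-vertical and Ω(V) = 0)
    (Va : Fin k → ((B × F) × (B × F)) → ℝ)
    (hVa : ∀ a, ContDiff ℝ (⊤ : ℕ∞) (Va a)) :
    letI Γ2 : ((B × F) × (B × F)) → ((B × F) × (B × F)) :=
      fun p => Γ1 p + ∑ a, Va a p • vLift (Efld a) p
    -- Γ₂ is a SODE
    (∀ p, (Γ2 p).1 = p.2) ∧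
    -- whose base integral curves project onto those of Γ̄
    (∀ γ : ℝ → (B × F) × (B × F),
      (∀ t, HasDerivAt γ (Γ2 (γ t)) t) →
      ∀ t, HasDerivAt (fun s => ((γ s).1.1, (γ s).2.1))
        (Γbar ((γ t).1.1, (γ t).2.1)) t) ∧
    -- Γ₂ is G-invariant iff Ẽ_a^C(V^b) = C^b_{ad} V^d
    ((∀ a, lieVF Γ2 (cLift (Efld a)) = 0) ↔
      (∀ a b p, fderiv ℝ (Va b) p (cLift (Efld a) p) = ∑ d, C b a d * Va d p)) := by
  have hEdiff : ∀ a, Differentiable ℝ (Efld a) := fun a => (hEsmooth a).differentiable (by simp)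
  have hVadiff : ∀ a, Differentiable ℝ (Va a) := fun a => (hVa a).differentiable (by simp)
  have hΓ1diff : Differentiable ℝ Γ1 := hΓ1smooth.differentiable (by simp)
  -- first components of the vertical part vanish
  have hWfst : ∀ p : (B × F) × (B × F),
      (∑ a, Va a p • vLift (Efld a) p).1 = 0 := by
    intro p
    simp [vLift, Prod.fst_sum]
  have hWsnd1 : ∀ p : (B × F) × (B × F),
      (∑ a, Va a p • vLift (Efld a) p).2.1 = 0 := by
    intro p
    simp [vLift, Prod.snd_sum, Prod.fst_sum, hEvert]
  -- antisymmetry of the structure constants (pointwise, needs a point of B × F)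
  have hanti : ∀ (m : B × F) (c a b : Fin k), C c a b = - C c b a := by
    intro m c a b
    have h0 : lieVF (Efld a) (Efld b) m + lieVF (Efld b) (Efld a) m = 0 := by
      simp [lieVF]
    rw [congrFun (hbra a b) m, congrFun (hbra b a) m] at h0
    rw [← neg_add, neg_eq_zero] at h0
    have hsum : ∑ c, (C c a b + C c b a) • Efld c m = 0 := by
      simpa [add_smul, Finset.sum_add_distrib] using h0
    have hc := Fintype.linearIndependent_iff.mp (hind m) (fun c => C c a b + C c b a) hsum c
    linarith
  -- independence of the vertical lifts
  have hindV : ∀ (m : B × F) (g : Fin k → ℝ),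
      (∑ b, g b • (((0 : B × F), Efld b m) : (B × F) × (B × F))) = 0 → ∀ b, g b = 0 := by
    intro m g hg b
    have hli : LinearIndependent ℝ (fun a => (((0 : B × F), Efld a m) : (B × F) × (B × F))) := by
      have := (hind m).map' (LinearMap.inr ℝ (B × F) (B × F)) Submodule.ker_inr
      exact this
    exact Fintype.linearIndependent_iff.mp hli g hg b
  refine ⟨?_, ?_, ?_⟩
  · -- Part 1: SODE
    intro p
    show (Γ1 p + ∑ a, Va a p • vLift (Efld a) p).1 = p.2
    rw [Prod.fst_add, hWfst, hΓ1sode, add_zero]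
  · -- Part 2: projection of base integral curves
    intro γ hγ t
    set L : (((B × F) × (B × F)) →L[ℝ] (B × B)) :=
      ((ContinuousLinearMap.fst ℝ B F).comp (ContinuousLinearMap.fst ℝ (B × F) (B × F))).prod
        ((ContinuousLinearMap.fst ℝ B F).comp (ContinuousLinearMap.snd ℝ (B × F) (B × F)))
      with hLdef
    have h := (L.hasFDerivAt).comp_hasDerivAt t (hγ t)
    have hval : L ((fun p => Γ1 p + ∑ a, Va a p • vLift (Efld a) p) (γ t))
        = Γbar ((γ t).1.1, (γ t).2.1) := by
      show (((Γ1 (γ t) + ∑ a, Va a (γ t) • vLift (Efld a) (γ t)).1.1),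
        ((Γ1 (γ t) + ∑ a, Va a (γ t) • vLift (Efld a) (γ t)).2.1)) = _
      simp only [Prod.fst_add, Prod.snd_add, hWfst, hWsnd1, Prod.fst_zero, add_zero]
      exact hΓ1rel (γ t)
    rw [hval] at h
    exact h
  · -- Part 3
    -- the key pointwise formula for the bracket
    have key : ∀ (a : Fin k) (p : (B × F) × (B × F)),
        lieVF (fun q => Γ1 q + ∑ c, Va c q • vLift (Efld c) q) (cLift (Efld a)) p
          = ∑ b, ((∑ d, C b a d * Va d p) - fderiv ℝ (Va b) p (cLift (Efld a) p))
              • (((0 : B × F), Efld b p.1) : (B × F) × (B × F)) := by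
      intro a p
      obtain ⟨L, hL, hLv⟩ := cLift_hasFDerivAt (Efld a) (hEsmooth a) p
      have hΓ1d : HasFDerivAt Γ1 (fderiv ℝ Γ1 p) p := (hΓ1diff p).hasFDerivAt
      have hWd : HasFDerivAt (fun q => ∑ c, Va c q • vLift (Efld c) q)
          (∑ b, (Va b p • ((0 : ((B × F) × (B × F)) →L[ℝ] (B × F)).prod
              ((fderiv ℝ (Efld b) p.1).comp (ContinuousLinearMap.fst ℝ (B × F) (B × F))))
            + (fderiv ℝ (Va b) p).smulRight (vLift (Efld b) p))) p := by
        apply HasFDerivAt.fun_sum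
        intro b _
        exact ((hVadiff b) p).hasFDerivAt.smul (vLift_hasFDerivAt _ (hEdiff b) p)
      have hΓ2d := hΓ1d.fun_add hWd
      have h0 := congrFun (hΓ1inv a) p
      simp only [lieVF, Pi.zero_apply] at h0 ⊢
      rw [hL.fderiv] at h0 ⊢
      rw [hΓ2d.fderiv]
      rw [sub_eq_zero] at h0
      rw [map_add, ContinuousLinearMap.add_apply, h0, add_sub_add_left_eq_sub]
      -- now: L (W p) - D (cLift (Efld a) p) = RHS
      have hWp : (∑ c, Va c p • vLift (Efld c) p)
          = (((0 : B × F), ∑ c, Va c p • Efld c p.1) : (B × F) × (B × F)) := by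
        rw [Prod.ext_iff]
        constructor
        · simp [vLift, Prod.fst_sum]
        · simp [vLift, Prod.snd_sum]
      rw [hWp, hLv]
      simp only [map_sum, map_smul]
      simp only [ContinuousLinearMap.sum_apply, ContinuousLinearMap.add_apply,
        ContinuousLinearMap.smul_apply, ContinuousLinearMap.smulRight_apply,
        ContinuousLinearMap.prod_apply, ContinuousLinearMap.comp_apply,
        ContinuousLinearMap.zero_apply, ContinuousLinearMap.coe_fst',
        ContinuousLinearMap.coe_snd', cLift, vLift]
      -- componentwise
      rw [Prod.ext_iff]
      constructor
      · simp [Prod.fst_sum]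
      · simp only [Prod.snd_sum, Prod.smul_snd, Prod.snd_add, Prod.fst_sum, Prod.smul_fst,
          Prod.snd_sub, Prod.fst_sub]
        -- second components
        have hbr : ∀ b : Fin k, fderiv ℝ (Efld a) p.1 (Efld b p.1)
            = fderiv ℝ (Efld b) p.1 (Efld a p.1) - ∑ c, C c b a • Efld c p.1 := by
          intro b
          have := congrFun (hbra b a) p.1
          simp only [lieVF] at this
          rw [sub_eq_iff_eq_add] at this
          rw [this]
          abel
        calc (∑ b, Va b p • fderiv ℝ (Efld a) p.1 (Efld b p.1))
              - ∑ b, (Va b p • fderiv ℝ (Efld b) p.1 (Efld a p.1)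
                + fderiv ℝ (Va b) p (Efld a p.1, fderiv ℝ (Efld a) p.1 p.2) • Efld b p.1)
            = (∑ b, (Va b p • fderiv ℝ (Efld b) p.1 (Efld a p.1)
                - ∑ c, (Va b p * C c b a) • Efld c p.1))
              - ∑ b, (Va b p • fderiv ℝ (Efld b) p.1 (Efld a p.1)
                + fderiv ℝ (Va b) p (Efld a p.1, fderiv ℝ (Efld a) p.1 p.2) • Efld b p.1) := by
              congr 1
              refine Finset.sum_congr rfl fun b _ => ?_
              rw [hbr b, smul_sub, Finset.smul_sum]
              congr 1
              refine Finset.sum_congr rfl fun c _ => ?_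
              rw [smul_smul]
          _ = (- ∑ b, ∑ c, (Va b p * C c b a) • Efld c p.1)
              - ∑ b, fderiv ℝ (Va b) p (Efld a p.1, fderiv ℝ (Efld a) p.1 p.2) • Efld b p.1 := by
              rw [Finset.sum_sub_distrib, Finset.sum_add_distrib]
              abel
          _ = (∑ b, (∑ d, C b a d * Va d p) • Efld b p.1)
              - ∑ b, fderiv ℝ (Va b) p (Efld a p.1, fderiv ℝ (Efld a) p.1 p.2) • Efld b p.1 := by
              congr 1
              rw [Finset.sum_comm, ← Finset.sum_neg_distrib]
              refine Finset.sum_congr rfl fun b _ => ?_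
              rw [← Finset.sum_neg_distrib, Finset.sum_smul]
              refine Finset.sum_congr rfl fun d _ => ?_
              rw [← neg_smul]
              congr 1
              rw [hanti p.1 b a d]
              ring
          _ = ∑ b, ((∑ d, C b a d * Va d p)
                - fderiv ℝ (Va b) p (Efld a p.1, fderiv ℝ (Efld a) p.1 p.2)) • Efld b p.1 := by
              rw [← Finset.sum_sub_distrib]
              refine Finset.sum_congr rfl fun b _ => ?_
              rw [sub_smul]
    constructor
    · intro h a b p
      have hk := key a p
      rw [congrFun (h a) p] at hk
      have hc := hindV p.1
        (fun b => (∑ d, C b a d * Va d p) - fderiv ℝ (Va b) p (cLift (Efld a) p)) hk.symm b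
      have := sub_eq_zero.mp hc
      exact this.symm
    · intro h a
      funext p
      show lieVF (fun q => Γ1 q + ∑ c, Va c q • vLift (Efld c) q) (cLift (Efld a)) p = 0
      rw [key a p]
      apply Finset.sum_eq_zero
      intro b _
      rw [h a b p, sub_self, zero_smul]
end
end
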